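/- arXiv:2212.05163 — 2 statements merged into one kernel-verified Lean document; each statement's English description precedes it below -/
import Mathlib

section
/- Let ℋ be a real Hilbert space, 𝒜 a closed linear subspace, h ∈ ℋ with P_𝒜 h ≠ 0, and s ∈ ℝ. Let 𝒮 = {v ∈ 𝒜 : ⟨v, h⟩ = s}. Then for all u ∈ ℋ, the orthogonal projection of u onto 𝒮 is P_𝒮 u = ũ + ((s − ⟨ũ, h⟩)/‖h̃‖²) h̃, where ũ = P_𝒜 u and h̃ = P_𝒜 h. -/
open scoped RealInnerProductSpace

theorem norm_sub_le_norm_sub_of_inner_eq_zero {E : Type*} [NormedAddCommGroup E]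
    [InnerProductSpace ℝ E] {u w v : E} (huw : ⟪u - w, w - v⟫ = 0) : ‖u - w‖ ≤ ‖u - v‖ := by
  have hpyth := norm_add_sq_eq_norm_sq_add_norm_sq_real huw
  rw [sub_add_sub_cancel] at hpyth
  refine (mul_self_le_mul_self_iff (norm_nonneg _) (norm_nonneg _)).2 ?_
  rw [hpyth]
  exact le_add_of_nonneg_right (mul_self_nonneg _)

theorem stmt2_general {H : Type*} [NormedAddCommGroup H] [InnerProductSpace ℝ H]
    (A : Submodule ℝ H) [CompleteSpace A] (h : H)
    (hh : ((A.orthogonalProjection h : A) : H) ≠ 0) (s : ℝ) (u : H) :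
    let ht : H := A.orthogonalProjection h
    let ut : H := A.orthogonalProjection u
    let w : H := ut + ((s - ⟪ut, h⟫) / ‖ht‖ ^ 2) • ht
    (w ∈ A ∧ ⟪w, h⟫ = s) ∧
      ∀ v ∈ A, ⟪v, h⟫ = s → ‖u - w‖ ≤ ‖u - v‖ := by
  intro ht ut w
  set c := (s - ⟪ut, h⟫) / ‖ht‖ ^ 2
  have hproj (x : H) (hx : x ∈ A) : ⟪ht, x⟫ = ⟪h, x⟫ :=
    A.inner_orthogonalProjectionOnto_eq_of_mem_right ⟨x, hx⟩ h
  have hwA : w ∈ A := A.add_mem (Submodule.coe_mem _) (A.smul_mem c (Submodule.coe_mem _))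
  have hwh : ⟪w, h⟫ = s := by
    have hht : ⟪ht, h⟫ = ‖ht‖ ^ 2 := by
      rw [real_inner_comm, ← hproj ht (Submodule.coe_mem _), real_inner_self_eq_norm_sq]
    rw [inner_add_left, real_inner_smul_left, hht, 
      div_mul_cancel₀ _ (pow_ne_zero 2 (norm_ne_zero_iff.2 hh))]
    ring
  refine ⟨⟨hwA, hwh⟩, fun v hv hvs => norm_sub_le_norm_sub_of_inner_eq_zero ?_⟩
  have hwv : w - v ∈ A := A.sub_mem hwA hv
  -- `u - w = (u - ut) - c • ht` is orthogonal to `w - v ∈ A`: `u - ut ∈ Aᗮ`, and `ht` acts like `h`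
  -- on `A`, where `⟪w, h⟫ = ⟪v, h⟫`.
  have hht_perp : ⟪ht, w - v⟫ = 0 := by
    rw [hproj _ hwv, real_inner_comm, inner_sub_left, hwh, hvs, sub_self]
  calc ⟪u - w, w - v⟫ = ⟪u - ut, w - v⟫ - c * ⟪ht, w - v⟫ := by
        rw [← real_inner_smul_left, ← inner_sub_left, sub_sub]
    _ = 0 := by
        rw [show ⟪u - ut, w - v⟫ = 0 from A.starProjection_inner_eq_zero u _ hwv, hht_perp,
          mul_zero, sub_zero]

theorem stmt2 {H : Type*} [NormedAddCommGroup H] [InnerProductSpace ℝ H] [CompleteSpace H]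
    (A : Submodule ℝ H) [CompleteSpace A] (h : H)
    (hh : ((A.orthogonalProjection h : A) : H) ≠ 0) (s : ℝ) (u : H) :
    let ht : H := A.orthogonalProjection h
    let ut : H := A.orthogonalProjection u
    let w : H := ut + ((s - ⟪ut, h⟫) / ‖ht‖ ^ 2) • ht
    (w ∈ A ∧ ⟪w, h⟫ = s) ∧
      ∀ v ∈ A, ⟪v, h⟫ = s → ‖u - w‖ ≤ ‖u - v‖ :=
  stmt2_general A h hh s u
end

section
/- Let 𝒜 be a closed subspace of a real Hilbert space ℋ, (ĥ_k)_{k∈Z} an orthonormal family, s_k = ⟨x, ĥ_k⟩ for some x ∈ 𝒜, and define T : 𝒜 → 𝒜 by Tu = u + Σ_k (s_k − ⟨u, ĥ_k⟩) P_𝒜 ĥ_k. Then for every u ∈ 𝒜, ‖Tu − x‖ ≤ ‖u − x‖, with equality if and only if ⟨u, ĥ_k⟩ = s_k for all k ∈ Z. -/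
/-!
Let `P` be the orthogonal projection onto `A`, and put `w = u - x ∈ A` and `cₖ = ⟪w, hₖ⟫`,
so that `u + d - x = w - ∑ cₖ P hₖ`. Since `P` is self-adjoint and fixes `w`, the cross term is
`⟪w, d⟫ = -∑ cₖ²`, while `‖d‖² = -∑ cₖ ⟪P d, hₖ⟫ ≤ ∑ cₖ²` by AM-GM and Bessel's inequality
for `P d`. Expanding the square, `‖u + d - x‖² + ∑ cₖ² ≤ ‖u - x‖²`, and `∑ cₖ² = 0` exactly
when every `cₖ` vanishes.
-/

open scoped RealInnerProductSpace

section ProjectedBesselSum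

variable {E ι : Type*} [NormedAddCommGroup E] [InnerProductSpace ℝ E] {e : ι → E}

theorem Orthonormal.summable_real_inner_sq (he : Orthonormal ℝ e) (x : E) :
    Summable fun i => ⟪x, e i⟫ ^ 2 := by
  simpa [real_inner_comm] using he.inner_products_summable (x := x)

theorem Orthonormal.tsum_real_inner_sq_le (he : Orthonormal ℝ e) (x : E) :
    ∑' i, ⟪x, e i⟫ ^ 2 ≤ ‖x‖ ^ 2 := by
  simpa [real_inner_comm] using he.tsum_inner_products_le (x := x)

variable (K : Submodule ℝ E) [K.HasOrthogonalProjection]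

theorem norm_sq_le_tsum_sq_of_hasSum_smul_starProjection (he : Orthonormal ℝ e) {c : ι → ℝ}
    (hc : Summable fun k => c k ^ 2) {d : E}
    (hd : HasSum (fun k => c k • K.starProjection (e k)) d) :
    ‖d‖ ^ 2 ≤ ∑' k, c k ^ 2 := by
  set a : ι → ℝ := fun k => ⟪K.starProjection d, e k⟫
  have hdd : HasSum (fun k => c k * a k) (‖d‖ ^ 2) := by
    simpa [a, inner_smul_right, ← K.inner_starProjection_left_eq_right, mul_comm] using
      (innerSL ℝ d).hasSum hd
  have ha : Summable fun k => a k ^ 2 := he.summable_real_inner_sq _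
  have hamgm : ‖d‖ ^ 2 ≤ ∑' k, (c k ^ 2 + a k ^ 2) / 2 :=
    hasSum_le (fun k => by nlinarith [sq_nonneg (c k - a k)]) hdd ((hc.add ha).div_const 2).hasSum
  have hbessel : ∑' k, a k ^ 2 ≤ ‖d‖ ^ 2 :=
    (he.tsum_real_inner_sq_le _).trans (pow_le_pow_left₀ (norm_nonneg _)
      (K.norm_starProjection_apply_le d) 2)
  rw [tsum_div_const, hc.tsum_add ha] at hamgm
  linarith

theorem norm_add_sq_add_tsum_le_of_hasSum_neg_inner_smul_starProjection (he : Orthonormal ℝ e)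
    {w d : E} (hw : w ∈ K) (hd : HasSum (fun k => -⟪w, e k⟫ • K.starProjection (e k)) d) :
    ‖w + d‖ ^ 2 + ∑' k, ⟪w, e k⟫ ^ 2 ≤ ‖w‖ ^ 2 := by
  have hwd : HasSum (fun k => -⟪w, e k⟫ ^ 2) ⟪w, d⟫ := by
    simpa [inner_smul_right, ← K.inner_starProjection_left_eq_right,
      K.starProjection_eq_self_iff.mpr hw, sq] using (innerSL ℝ w).hasSum hd
  have hdn : ‖d‖ ^ 2 ≤ ∑' k, ⟪w, e k⟫ ^ 2 := by
    simpa using norm_sq_le_tsum_sq_of_hasSum_smul_starProjection K he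
      (by simpa using he.summable_real_inner_sq w) hd
  have hcross : ⟪w, d⟫ = -∑' k, ⟪w, e k⟫ ^ 2 := by rw [← tsum_neg, hwd.tsum_eq]
  rw [norm_add_sq_real]
  linarith

theorem norm_add_le_and_eq_iff_of_hasSum_neg_inner_smul_starProjection (he : Orthonormal ℝ e)
    {w d : E} (hw : w ∈ K) (hd : HasSum (fun k => -⟪w, e k⟫ • K.starProjection (e k)) d) :
    ‖w + d‖ ≤ ‖w‖ ∧ (‖w + d‖ = ‖w‖ ↔ ∀ k, ⟪w, e k⟫ = 0) := by
  have key := norm_add_sq_add_tsum_le_of_hasSum_neg_inner_smul_starProjection K he hw hd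
  have hsum := he.summable_real_inner_sq w
  have hnonneg : 0 ≤ ∑' k, ⟪w, e k⟫ ^ 2 := tsum_nonneg fun k => sq_nonneg _
  refine ⟨(pow_le_pow_iff_left₀ (norm_nonneg _) (norm_nonneg _) two_ne_zero).mp (by linarith),
    fun heq k => ?_, fun hzero => ?_⟩
  · have hterm : ⟪w, e k⟫ ^ 2 ≤ ∑' k, ⟪w, e k⟫ ^ 2 :=
      hsum.le_tsum k fun j _ => sq_nonneg _
    rw [heq] at key
    exact pow_eq_zero_iff two_ne_zero |>.mp (le_antisymm (by linarith) (sq_nonneg _))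
  · have hd0 : d = 0 := hd.unique (by simp [hzero])
    rw [hd0, add_zero]

end ProjectedBesselSum

theorem stmt12_general {H ι : Type*} [NormedAddCommGroup H] [InnerProductSpace ℝ H]
    (A : Submodule ℝ H) [CompleteSpace A]
    (h : ι → H) (horth : Orthonormal ℝ h)
    (x : H) (hx : x ∈ A) (s : ι → ℝ) (hs : ∀ k, s k = ⟪x, h k⟫)
    (u : H) (hu : u ∈ A) (d : H)
    (hd : HasSum (fun k => (s k - ⟪u, h k⟫) • ((Submodule.orthogonalProjectionOnto A (h k) : A) : H)) d) :
    ‖u + d - x‖ ≤ ‖u - x‖ ∧ (‖u + d - x‖ = ‖u - x‖ ↔ ∀ k, ⟪u, h k⟫ = s k) := by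
  have hcoef : ∀ k, s k - ⟪u, h k⟫ = -⟪u - x, h k⟫ := fun k => by
    rw [hs, inner_sub_left, neg_sub]
  have hd' : HasSum (fun k => -⟪u - x, h k⟫ • A.starProjection (h k)) d := by
    simpa only [hcoef, Submodule.coe_orthogonalProjectionOnto_apply] using hd
  rw [show u + d - x = u - x + d by abel]
  simpa only [inner_sub_left, hs, sub_eq_zero] using
    norm_add_le_and_eq_iff_of_hasSum_neg_inner_smul_starProjection A horth (A.sub_mem hu hx) hd'

theorem stmt12 {H ι : Type*} [NormedAddCommGroup H] [InnerProductSpace ℝ H] [CompleteSpace H]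
    [Countable ι] (A : Submodule ℝ H) [CompleteSpace A] (hA : IsClosed (A : Set H))
    (h : ι → H) (horth : Orthonormal ℝ h)
    (x : H) (hx : x ∈ A) (s : ι → ℝ) (hs : ∀ k, s k = ⟪x, h k⟫)
    (u : H) (hu : u ∈ A) (d : H)
    (hd : HasSum (fun k => (s k - ⟪u, h k⟫) • ((Submodule.orthogonalProjectionOnto A (h k) : A) : H)) d) :
    ‖u + d - x‖ ≤ ‖u - x‖ ∧ (‖u + d - x‖ = ‖u - x‖ ↔ ∀ k, ⟪u, h k⟫ = s k) :=
  stmt12_general A h horth x hx s hs u hu d hd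
end
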